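/- arXiv:1501.01669 — 6 statements merged into one kernel-verified Lean document; each statement's English description precedes it below -/
import Mathlib

section
/- The set of primes dividing some term of the Yellowstone sequence is infinite. -/
/-- The Yellowstone sequence: a 1 = 1, a 2 = 2, a 3 = 3, and for n ≥ 4,
`a n` is the least positive integer not among `a 1, …, a (n-1)` which shares
a common factor with `a (n-2)` and is coprime to `a (n-1)`. -/
def IsYellowstone (a : ℕ → ℕ) : Prop :=
  a 1 = 1 ∧ a 2 = 2 ∧ a 3 = 3 ∧
  ∀ n, 4 ≤ n →
    IsLeast {k : ℕ | 0 < k ∧ (∀ m, 1 ≤ m → m < n → a m ≠ k) ∧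
      1 < Nat.gcd k (a (n - 2)) ∧ Nat.gcd k (a (n - 1)) = 1} (a n)

theorem yellowstone_prime_divisors_infinite (a : ℕ → ℕ) (ha : IsYellowstone a) :
    {p : ℕ | p.Prime ∧ ∃ n, 1 ≤ n ∧ p ∣ a n}.Infinite := by
  obtain ⟨h1, h2, h3, hstep⟩ := ha
  set S := {p : ℕ | p.Prime ∧ ∃ n, 1 ≤ n ∧ p ∣ a n} with hS
  by_contra hinf
  rw [Set.not_infinite] at hinf
  -- bound on S
  obtain ⟨Q, hQ⟩ := hinf.bddAbove
  -- a prime not in S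
  obtain ⟨p, hp⟩ := (Nat.infinite_setOf_prime.diff hinf).nonempty
  obtain ⟨hpprime, hpS⟩ := hp
  have hpnd : ∀ m, 1 ≤ m → ¬ p ∣ a m := by
    intro m hm hd
    exact hpS ⟨hpprime, m, hm, hd⟩
  -- key bound: for n ≥ 4, a n ≤ Q * p
  have key : ∀ n, 4 ≤ n → a n ≤ Q * p := by
    intro n hn
    obtain ⟨⟨hpos, hnot, hg2, hg1⟩, hlb⟩ := hstep n hn
    obtain ⟨q, hqprime, hqdvd⟩ := Nat.exists_prime_and_dvd (by omega : Nat.gcd (a n) (a (n-2)) ≠ 1)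
    have hqan : q ∣ a n := hqdvd.trans (Nat.gcd_dvd_left _ _)
    have hqan2 : q ∣ a (n-2) := hqdvd.trans (Nat.gcd_dvd_right _ _)
    have hqS : q ∈ S := ⟨hqprime, n-2, by omega, hqan2⟩
    have hqQ : q ≤ Q := hQ hqS
    have hqnd1 : ¬ q ∣ a (n-1) := by
      intro hd
      have := Nat.dvd_gcd hqan hd
      rw [hg1] at this
      have h1 := Nat.le_of_dvd one_pos this
      have h2 := hqprime.two_le
      omega
    -- q * p is a candidate
    have hmem : q * p ∈ {k : ℕ | 0 < k ∧ (∀ m, 1 ≤ m → m < n → a m ≠ k) ∧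
      1 < Nat.gcd k (a (n - 2)) ∧ Nat.gcd k (a (n - 1)) = 1} := by
      refine ⟨Nat.mul_pos hqprime.pos hpprime.pos, ?_, ?_, ?_⟩
      · intro m hm _ heq
        exact hpnd m hm (heq ▸ dvd_mul_left p q)
      · have hdg : q ∣ Nat.gcd (q * p) (a (n-2)) :=
          Nat.dvd_gcd (dvd_mul_right q p) hqan2
        have hgpos : 0 < Nat.gcd (q * p) (a (n-2)) :=
          Nat.gcd_pos_of_pos_left _ (Nat.mul_pos hqprime.pos hpprime.pos)
        exact Nat.lt_of_lt_of_le hqprime.one_lt (Nat.le_of_dvd hgpos hdg)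
      · exact Nat.Coprime.mul ((hqprime.coprime_iff_not_dvd).mpr hqnd1)
          ((hpprime.coprime_iff_not_dvd).mpr (hpnd (n-1) (by omega)))
    have := hlb hmem
    calc a n ≤ q * p := this
      _ ≤ Q * p := Nat.mul_le_mul_right p hqQ
  -- injectivity on [4, ∞)
  have hinj : Set.InjOn a (Set.Ici 4) := by
    intro m hm n hn heq
    by_contra hne
    rcases lt_trichotomy m n with h | h | h
    · exact (hstep n (Set.mem_Ici.mp hn)).1.2.1 m (by have := Set.mem_Ici.mp hm; omega) h heq
    · exact hne h
    · exact (hstep m (Set.mem_Ici.mp hm)).1.2.1 n (by have := Set.mem_Ici.mp hn; omega) h heq.symm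
  have himg : a '' Set.Ici 4 ⊆ Set.Iic (Q * p) := by
    rintro x ⟨n, hn, rfl⟩
    exact key n (Set.mem_Ici.mp hn)
  exact ((Set.Ici_infinite 4).image hinj) ((Set.finite_Iic (Q * p)).subset himg)
end

section
/- For every prime p, there exists an index n such that p divides a(n), where a is the Yellowstone sequence. -/
/-!
The terms are distinct, so `a n → ∞`. Infinitely many terms are even: otherwise let `E` bound
the even terms; once all terms are odd and exceed `2E`, the even numbers `2 ^ j * r`, with `r`
the least prime factor of `a n`, are admissible candidates for `a (n + 2)`. One of them lies in
`(E, 2E]` unless `r > E`, and then `a (n + 2) < 2r` forces `a (n + 2)` to be a prime dividing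
`a n`. Applied at `n` and `n + 2` this gives `a (n + 4) = a (n + 2)`. Finally, if `p` divided no
term, then after an even term `a m` (so `a (m + 1)` is odd) the number `2p` is an admissible
candidate, so `a (m + 2) ≤ 2p`, which fails for large `m`.
-/

open Filter

namespace Nat

theorem one_lt_gcd_of_dvd {d x y : ℕ} (hd : 2 ≤ d) (hx : d ∣ x) (hy : d ∣ y) (hy0 : 0 < y) :
    1 < gcd x y :=
  hd.trans (le_of_dvd (gcd_pos_of_pos_right x hy0) (dvd_gcd hx hy))

theorem prime_and_dvd_of_lt_two_mul_minFac {x y : ℕ} (hx : 0 < x) (hgcd : 1 < gcd x y)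
    (hlt : x < 2 * y.minFac) : x.Prime ∧ x ∣ y := by
  set s := (gcd x y).minFac
  have hs : s.Prime := minFac_prime hgcd.ne'
  have hsy : s ∣ y := (minFac_dvd _).trans (gcd_dvd_right x y)
  obtain ⟨t, hst⟩ : s ∣ x := (minFac_dvd _).trans (gcd_dvd_left x y)
  have ht : t = 1 := by
    have hys : y.minFac ≤ s := minFac_le_of_dvd hs.two_le hsy
    have : t < 2 := Nat.lt_of_mul_lt_mul_left (a := s) (by rw [← hst]; omega)
    have : t ≠ 0 := by rintro rfl; omega
    omega
  rw [hst, ht, mul_one]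
  exact ⟨hs, hsy⟩

theorem exists_lt_two_pow_mul_le {r E : ℕ} (hr : 0 < r) (hrE : r ≤ E) :
    ∃ j, E < 2 ^ (j + 1) * r ∧ 2 ^ (j + 1) * r ≤ 2 * E := by
  refine ⟨log 2 (E / r), ?_, ?_⟩
  · exact (div_lt_iff_lt_mul hr).1 (lt_pow_succ_log_self one_lt_two _)
  · have hq : E / r ≠ 0 := (Nat.div_pos hrE hr).ne'
    calc 2 ^ (log 2 (E / r) + 1) * r = 2 * (2 ^ log 2 (E / r) * r) := by ring
      _ ≤ 2 * (E / r * r) := by gcongr; exact pow_log_le_self 2 hq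
      _ ≤ 2 * E := by gcongr; exact div_mul_le_self E r

end Nat

namespace IsYellowstone

variable {a : ℕ → ℕ}

theorem pos (ha : IsYellowstone a) {n : ℕ} (hn : 1 ≤ n) : 0 < a n := by
  obtain ⟨h1, h2, h3, hrec⟩ := ha
  rcases lt_or_ge n 4 with h | h
  · interval_cases n <;> simp [h1, h2, h3]
  · exact (hrec n h).1.1

theorem injOn (ha : IsYellowstone a) : Set.InjOn a (Set.Ici 1) := by
  obtain ⟨h1, h2, h3, hrec⟩ := ha
  have hne : ∀ m n, 1 ≤ m → m < n → a m ≠ a n := by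
    intro m n hm hmn
    rcases lt_or_ge n 4 with h | h
    · interval_cases n <;> interval_cases m <;> simp [h1, h2, h3]
    · exact fun he => (hrec n h).1.2.1 m hm hmn he
  intro m hm n hn hmn
  by_contra h
  rcases Nat.lt_or_gt_of_ne h with h | h
  · exact hne m n hm h hmn
  · exact hne n m hn h hmn.symm

theorem one_lt (ha : IsYellowstone a) {n : ℕ} (hn : 2 ≤ n) : 1 < a n := by
  have hne : a n ≠ a 1 := fun h => by
    have := ha.injOn (Set.mem_Ici.2 (by omega : 1 ≤ n)) (Set.mem_Ici.2 le_rfl) h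
    omega
  have := ha.pos (by omega : 1 ≤ n)
  rw [ha.1] at hne
  omega

theorem coprime_succ (ha : IsYellowstone a) {n : ℕ} (hn : 2 ≤ n) :
    Nat.Coprime (a (n + 1)) (a n) := by
  rcases hn.eq_or_lt with rfl | hn
  · rw [ha.2.1, ha.2.2.1]; norm_num
  · simpa using (ha.2.2.2 (n + 1) (by omega)).1.2.2.2

theorem one_lt_gcd (ha : IsYellowstone a) {n : ℕ} (hn : 2 ≤ n) :
    1 < Nat.gcd (a (n + 2)) (a n) := by
  simpa using (ha.2.2.2 (n + 2) (by omega)).1.2.2.1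

theorem apply_add_two_le (ha : IsYellowstone a) {n k : ℕ} (hn : 2 ≤ n) (hk : 0 < k)
    (hnew : ∀ m, 1 ≤ m → m < n + 2 → a m ≠ k) (hgcd : 1 < Nat.gcd k (a n))
    (hcop : Nat.Coprime k (a (n + 1))) : a (n + 2) ≤ k :=
  (ha.2.2.2 (n + 2) (by omega)).2 ⟨hk, hnew, by simpa using hgcd, by simpa using hcop⟩

theorem tendsto_atTop (ha : IsYellowstone a) : Tendsto a atTop atTop := by
  refine (tendsto_add_atTop_iff_nat 1).1 (Function.Injective.nat_tendsto_atTop fun m n h => ?_)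
  simpa using ha.injOn (Set.mem_Ici.2 (Nat.le_add_left 1 m)) (Set.mem_Ici.2 (Nat.le_add_left 1 n))
    h

theorem apply_add_two_le_two_pow_mul_minFac (ha : IsYellowstone a) {E n j : ℕ}
    (hE : ∀ m, 1 ≤ m → Even (a m) → a m ≤ E) (hn : 2 ≤ n) (hodd : Odd (a (n + 1)))
    (hj : E < 2 ^ (j + 1) * (a n).minFac) : a (n + 2) ≤ 2 ^ (j + 1) * (a n).minFac := by
  have hr : (a n).minFac.Prime := Nat.minFac_prime (ha.one_lt hn).ne'
  have hr_not_dvd : ¬ (a n).minFac ∣ a (n + 1) := fun h =>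
    hr.one_lt.ne' (Nat.eq_one_of_dvd_coprimes (ha.coprime_succ hn) h (Nat.minFac_dvd _))
  have heven : Even (2 ^ (j + 1) * (a n).minFac) :=
    (Nat.even_pow.2 ⟨even_two, j.succ_ne_zero⟩).mul_right _
  refine ha.apply_add_two_le hn (Nat.mul_pos (by positivity) hr.pos) (fun m hm _ h => ?_) ?_ ?_
  · exact hj.not_ge (h ▸ hE m hm (h ▸ heven))
  · exact Nat.one_lt_gcd_of_dvd hr.two_le (dvd_mul_left _ _) (Nat.minFac_dvd _)
      (ha.pos (by omega))
  · exact Nat.Coprime.mul_left (Nat.Coprime.pow_left _ (Nat.coprime_two_left.2 hodd))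
      (hr.coprime_iff_not_dvd.2 hr_not_dvd)

theorem prime_and_dvd_of_even_le (ha : IsYellowstone a) {E n : ℕ}
    (hE : ∀ m, 1 ≤ m → Even (a m) → a m ≤ E) (hn : 2 ≤ n) (hodd₁ : Odd (a (n + 1)))
    (hodd₂ : Odd (a (n + 2))) (hbig : 2 * E < a (n + 2)) :
    (a (n + 2)).Prime ∧ a (n + 2) ∣ a n := by
  set r := (a n).minFac
  have hr : 0 < r := Nat.minFac_pos _
  rcases le_or_gt r E with hrE | hEr
  · obtain ⟨j, hEj, hj⟩ := Nat.exists_lt_two_pow_mul_le hr hrE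
    exact absurd ((ha.apply_add_two_le_two_pow_mul_minFac hE hn hodd₁ hEj).trans hj) hbig.not_ge
  · have hle : a (n + 2) ≤ 2 * r := by
      simpa using ha.apply_add_two_le_two_pow_mul_minFac hE hn hodd₁ (j := 0) (by omega)
    have hne : a (n + 2) ≠ 2 * r := fun h => Nat.not_even_iff_odd.2 hodd₂ (h ▸ even_two_mul r)
    exact Nat.prime_and_dvd_of_lt_two_mul_minFac (ha.pos (by omega)) (ha.one_lt_gcd hn)
      (lt_of_le_of_ne hle hne)

theorem frequently_even (ha : IsYellowstone a) : ∃ᶠ n in atTop, Even (a n) := by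
  by_contra h
  obtain ⟨N, hN⟩ := eventually_atTop.1 (not_frequently.1 h)
  set E := (Finset.range N).sup a
  have hE : ∀ m, 1 ≤ m → Even (a m) → a m ≤ E := fun m _ hm =>
    Finset.le_sup (Finset.mem_range.2 (lt_of_not_ge fun h => hN m h hm))
  have hodd : ∀ k, ∀ᶠ n in atTop, Odd (a (n + k)) := fun k =>
    (tendsto_add_atTop_nat k).eventually
      (eventually_atTop.2 ⟨N, fun n h => Nat.not_even_iff_odd.1 (hN n h)⟩)
  have hprime : ∀ᶠ n in atTop, (a (n + 2)).Prime ∧ a (n + 2) ∣ a n := by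
    filter_upwards [eventually_ge_atTop 2, hodd 1, hodd 2,
      (ha.tendsto_atTop.comp (tendsto_add_atTop_nat 2)).eventually_gt_atTop (2 * E)]
      with n hn h₁ h₂ hbig
    exact ha.prime_and_dvd_of_even_le hE hn h₁ h₂ hbig
  obtain ⟨n, ⟨hp, -⟩, hp', hdvd⟩ :=
    (hprime.and ((tendsto_add_atTop_nat 2).eventually hprime)).exists
  have heq : a (n + 2 + 2) = a (n + 2) := (Nat.prime_dvd_prime_iff_eq hp' hp).1 hdvd
  have := ha.injOn (Set.mem_Ici.2 (by omega)) (Set.mem_Ici.2 (by omega)) heq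
  omega

end IsYellowstone

theorem yellowstone_exists_multiple (a : ℕ → ℕ) (ha : IsYellowstone a)
    (p : ℕ) (hp : p.Prime) : ∃ n, 1 ≤ n ∧ p ∣ a n := by
  by_contra! hp_never
  obtain ⟨m, heven, hm, hbig⟩ := (ha.frequently_even.and_eventually ((eventually_ge_atTop 2).and
    ((ha.tendsto_atTop.comp (tendsto_add_atTop_nat 2)).eventually_gt_atTop (2 * p)))).exists
  have hodd : Odd (a (m + 1)) :=
    (Nat.Coprime.coprime_dvd_left heven.two_dvd (ha.coprime_succ hm).symm).odd_of_left
  refine hbig.not_ge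
    (ha.apply_add_two_le hm (Nat.mul_pos two_pos hp.pos) (fun k hk _ h => ?_) ?_ ?_)
  · exact hp_never k hk (h ▸ dvd_mul_left p 2)
  · exact Nat.one_lt_gcd_of_dvd le_rfl (dvd_mul_right 2 p) heven.two_dvd (ha.pos (by omega))
  · exact Nat.Coprime.mul_left (Nat.coprime_two_left.2 hodd)
      (hp.coprime_iff_not_dvd.2 (hp_never (m + 1) (by omega)))
end

section
/- For every prime p, there exists an index n such that a(n) = p, where a is the Yellowstone sequence. -/
/-!
Every prime `p` divides infinitely many terms. Otherwise, right after an even term `a t` with `t`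
large, the least number `2 ^ j * 2p` exceeding all early terms is an admissible value for
`a (t + 2)`, so the terms would stay below `max (2p) (2M)`. That infinitely many terms are even
is seen the same way: otherwise the candidate `2 ^ j * 2q`, with `q` the least prime factor of
`a t`, forces every large (odd) term `a (t + 2)` to be at most `2q`, hence prime; but then the
primes `a (t + 2)` and `a (t + 4)` would have to share a factor. Finally, if `p ∣ a t` for a large
`t`, then `p` is coprime to `a (t + 1)`, so were `p` never used, `a (t + 2) ≤ p` would contradict
`a n → ∞`.
-/

open Filter

namespace Nat

theorem exists_two_pow_mul_mem_Ioc {d : ℕ} (hd : 0 < d) (M : ℕ) :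
    ∃ j, M < 2 ^ j * d ∧ 2 ^ j * d ≤ max d (2 * M) := by
  classical
  have hex : ∃ j, M < 2 ^ j * d :=
    ⟨M, Nat.lt_two_pow_self.trans_le (Nat.le_mul_of_pos_right _ hd)⟩
  refine ⟨Nat.find hex, Nat.find_spec hex, ?_⟩
  rcases h : Nat.find hex with _ | i
  · simp
  · have hi : 2 ^ i * d ≤ M := not_lt.1 (Nat.find_min hex (by omega))
    rw [pow_succ, mul_right_comm]
    exact le_max_of_le_right (by omega)

theorem prime_of_odd_of_le_two_mul_minFac {x y : ℕ} (hx : Odd x) (hxy : x ≤ 2 * y.minFac)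
    (hg : 1 < x.gcd y) : x.Prime := by
  set r := (x.gcd y).minFac
  have hr : r.Prime := Nat.minFac_prime hg.ne'
  have hry : y.minFac ≤ r :=
    Nat.minFac_le_of_dvd hr.two_le ((Nat.minFac_dvd _).trans (Nat.gcd_dvd_right x y))
  obtain ⟨c, hc⟩ : r ∣ x := (Nat.minFac_dvd _).trans (Nat.gcd_dvd_left x y)
  have hc2 : c ≤ 2 := Nat.le_of_mul_le_mul_left (by nlinarith) hr.pos
  obtain ⟨k, rfl⟩ : Odd c := Nat.Odd.of_mul_right (hc ▸ hx)
  obtain rfl : k = 0 := by omega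
  simpa [hc] using hr

theorem one_lt_gcd_of_dvd_s5 {r m n : ℕ} (hr : 1 < r) (hm : 0 < m) (hrm : r ∣ m) (hrn : r ∣ n) :
    1 < m.gcd n :=
  hr.trans_le (Nat.le_of_dvd (Nat.gcd_pos_of_pos_left n hm) (Nat.dvd_gcd hrm hrn))

theorem exists_forall_lt_le (f : ℕ → ℕ) (N : ℕ) : ∃ M, ∀ m < N, f m ≤ M :=
  ⟨(Finset.range N).sup f, fun _ hm => Finset.le_sup (Finset.mem_range.2 hm)⟩

end Nat

namespace IsYellowstone

variable {a : ℕ → ℕ}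

theorem ne_of_lt (ha : IsYellowstone a) {m n : ℕ} (hm : 1 ≤ m) (hmn : m < n) :
    a m ≠ a n := by
  obtain ⟨h1, h2, h3, hrec⟩ := ha
  rcases (show n = 2 ∨ n = 3 ∨ 4 ≤ n by omega) with rfl | rfl | hn
  · obtain rfl : m = 1 := by omega
    simp [h1, h2]
  · rcases (show m = 1 ∨ m = 2 by omega) with rfl | rfl <;> simp [h1, h2, h3]
  · exact (hrec n hn).1.2.1 m hm hmn

theorem coprime_succ_s5 (ha : IsYellowstone a) {t : ℕ} (ht : 2 ≤ t) :
    (a t).Coprime (a (t + 1)) := by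
  rcases (show t = 2 ∨ 3 ≤ t by omega) with rfl | ht
  · rw [ha.2.1, ha.2.2.1]; decide
  · exact Nat.Coprime.symm ((ha.2.2.2 (t + 1) (by omega)).1.2.2.2)

theorem coprime_succ_of_dvd (ha : IsYellowstone a) {t k : ℕ} (ht : 2 ≤ t) (hk : k ∣ a t) :
    k.Coprime (a (t + 1)) :=
  (ha.coprime_succ_s5 ht).coprime_dvd_left hk

theorem one_lt_gcd_s5 (ha : IsYellowstone a) {t : ℕ} (ht : 2 ≤ t) :
    1 < (a (t + 2)).gcd (a t) :=
  (ha.2.2.2 (t + 2) (by omega)).1.2.2.1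

theorem le_of_candidate (ha : IsYellowstone a) {t k : ℕ} (ht : 2 ≤ t) (hk : 0 < k)
    (hfresh : ∀ m, 1 ≤ m → m < t + 2 → a m ≠ k) (hshare : 1 < k.gcd (a t))
    (hcop : k.Coprime (a (t + 1))) : a (t + 2) ≤ k :=
  (ha.2.2.2 (t + 2) (by omega)).2 ⟨hk, hfresh, hshare, hcop⟩

theorem eventually_gt_add_two (ha : IsYellowstone a) (B : ℕ) : ∀ᶠ t in atTop, B < a (t + 2) :=
  (tendsto_add_atTop_nat 2).eventually (ha.tendsto_atTop.eventually_gt_atTop B)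

/-- The candidate is the least `2 ^ j * d` beyond the values `a m`, `m < N`. -/
theorem le_max_of_not_dvd (ha : IsYellowstone a) {N M d t : ℕ} (hd : 0 < d) (hd2 : 2 ∣ d)
    (hM : ∀ m < N, a m ≤ M) (hfresh : ∀ m ≥ N, ¬ d ∣ a m) (ht : 2 ≤ t)
    (hshare : 1 < d.gcd (a t)) (hcop : d.Coprime (a (t + 1))) :
    a (t + 2) ≤ max d (2 * M) := by
  obtain ⟨j, hMk, hk⟩ := Nat.exists_two_pow_mul_mem_Ioc hd M
  refine le_trans (ha.le_of_candidate ht (by positivity) ?_ ?_ ?_) hk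
  · intro m _ _ hmk
    by_cases hmN : m < N
    · exact absurd (hM m hmN) (by omega)
    · exact hfresh m (by omega) (hmk ▸ dvd_mul_left d _)
  · exact Nat.one_lt_gcd_of_dvd_s5 hshare (by positivity)
      ((Nat.gcd_dvd_left d _).trans (dvd_mul_left d _)) (Nat.gcd_dvd_right d _)
  · exact ((hcop.coprime_dvd_left hd2).pow_left j).mul_left hcop

theorem frequently_dvd (ha : IsYellowstone a) {p : ℕ} (hp : p.Prime) :
    ∃ᶠ n in atTop, p ∣ a n := by
  by_contra h
  obtain ⟨N, hN⟩ := eventually_atTop.1 (not_frequently.1 h)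
  obtain ⟨M, hM⟩ := Nat.exists_forall_lt_le a N
  obtain ⟨t, ht2, htN, hbig⟩ := (ha.frequently_even.and_eventually
    ((eventually_ge_atTop (N + 2)).and
      (ha.eventually_gt_add_two (max (2 * p) (2 * M))))).exists
  have h2 : 2 ∣ a t := even_iff_two_dvd.1 ht2
  have hd : 0 < 2 * p := Nat.mul_pos two_pos hp.pos
  have hshare : 1 < (2 * p).gcd (a t) :=
    Nat.one_lt_gcd_of_dvd_s5 Nat.one_lt_two hd (dvd_mul_right 2 p) h2
  have hcop : (2 * p).Coprime (a (t + 1)) :=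
    (ha.coprime_succ_of_dvd (by omega) h2).mul_left (hp.coprime_iff_not_dvd.2 (hN _ (by omega)))
  have hle := ha.le_max_of_not_dvd hd (dvd_mul_right 2 p) hM
    (fun m hm hpm => hN m hm (dvd_of_mul_left_dvd hpm)) (by omega) hshare hcop
  omega

end IsYellowstone

theorem yellowstone_contains_prime (a : ℕ → ℕ) (ha : IsYellowstone a)
    (p : ℕ) (hp : p.Prime) : ∃ n, 1 ≤ n ∧ a n = p := by
  by_contra! hmissing
  obtain ⟨t, hpt, ht, hbig⟩ := ((ha.frequently_dvd hp).and_eventually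
    ((eventually_ge_atTop 2).and (ha.eventually_gt_add_two p))).exists
  have hle : a (t + 2) ≤ p :=
    ha.le_of_candidate ht hp.pos (fun m hm _ => hmissing m hm)
      (Nat.one_lt_gcd_of_dvd_s5 hp.one_lt hp.pos dvd_rfl hpt) (ha.coprime_succ_of_dvd ht hpt)
  omega
end

section
/- The sequence (a(n)) is unbounded: for every M there exists n with a(n) > M. -/
theorem yellowstone_unbounded (a : ℕ → ℕ) (ha : IsYellowstone a) :
    ∀ M : ℕ, ∃ n, 1 ≤ n ∧ M < a n := by
  obtain ⟨h1, h2, h3, h4⟩ := ha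
  have hinj : ∀ m n, 1 ≤ m → m < n → a m ≠ a n := by
    intro m n hm hmn
    rcases lt_or_ge n 4 with h | h
    · interval_cases n <;> interval_cases m <;> simp_all
    · exact (h4 n h).1.2.1 m hm hmn
  intro M
  by_contra hc
  push_neg at hc
  have hfi : Function.Injective (fun i : Fin (M+2) =>
      (⟨a (i+1), Nat.lt_succ_of_le (hc (i+1) (Nat.le_add_left 1 i))⟩ : Fin (M+1))) := by
    intro i j hij
    simp only [Fin.mk.injEq] at hij
    by_contra hne
    rcases Nat.lt_or_ge (i:ℕ) j with h | h
    · exact hinj (i+1) (j+1) (Nat.le_add_left 1 i) (by omega) hij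
    · have h' : (j:ℕ) < i := by
        rcases Nat.lt_or_ge (j:ℕ) i with h2 | h2
        · exact h2
        · exact absurd (Fin.ext (le_antisymm h2 h)) hne
      exact hinj (j+1) (i+1) (Nat.le_add_left 1 j) (by omega) hij.symm
  have := Fintype.card_le_of_injective _ hfi
  simp at this
end

section
/- If p < q are primes, then the first index at which a term of the Yellowstone sequence is divisible by p is strictly smaller than the first index at which a term is divisible by q. -/
theorem yellowstone_first_multiple_monotone (a : ℕ → ℕ) (ha : IsYellowstone a)
    (p q : ℕ) (hp : p.Prime) (hq : q.Prime) (hpq : p < q)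
    (np nq : ℕ)
    (hnp : 1 ≤ np ∧ p ∣ a np ∧ ∀ m, 1 ≤ m → m < np → ¬ p ∣ a m)
    (hnq : 1 ≤ nq ∧ q ∣ a nq ∧ ∀ m, 1 ≤ m → m < nq → ¬ q ∣ a m) :
    np < nq := by
  obtain ⟨ha1, ha2, ha3, hstep⟩ := ha
  obtain ⟨hnp1, hpdvd, hpmin⟩ := hnp
  obtain ⟨hnq1, hqdvd, hqmin⟩ := hnq
  by_contra hcon
  push_neg at hcon
  have hp2 : 2 ≤ p := hp.two_le
  have hq2 : 2 ≤ q := hq.two_le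
  rcases lt_or_ge nq 4 with h4 | h4
  · interval_cases nq
    · rw [ha1] at hqdvd
      have := Nat.dvd_one.mp hqdvd
      omega
    · rw [ha2] at hqdvd
      have : q = 2 := (Nat.prime_dvd_prime_iff_eq hq Nat.prime_two).mp hqdvd
      omega
    · rw [ha3] at hqdvd
      have hq3 : q = 3 := (Nat.prime_dvd_prime_iff_eq hq Nat.prime_three).mp hqdvd
      have hpp2 : p = 2 := by omega
      exact hpmin 2 (by omega) (by omega) (by rw [ha2, hpp2])
  · obtain ⟨⟨hpos, hnew, hg2, hg1⟩, hlb⟩ := hstep nq h4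
    set A2 := a (nq - 2) with hA2
    set A1 := a (nq - 1) with hA1
    set r := (Nat.gcd (a nq) A2).minFac with hrdef
    have hr : r.Prime := Nat.minFac_prime (by omega)
    have hrdvd : r ∣ Nat.gcd (a nq) A2 := Nat.minFac_dvd _
    have hran : r ∣ a nq := hrdvd.trans (Nat.gcd_dvd_left _ _)
    have hrA2 : r ∣ A2 := hrdvd.trans (Nat.gcd_dvd_right _ _)
    have hqA2 : ¬ q ∣ A2 := hqmin (nq - 2) (by omega) (by omega)
    have hpA2 : ¬ p ∣ A2 := hpmin (nq - 2) (by omega) (by omega)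
    have hpA1 : ¬ p ∣ A1 := hpmin (nq - 1) (by omega) (by omega)
    have hrq : r ≠ q := fun h => hqA2 (h ▸ hrA2)
    have hrA1 : ¬ r ∣ A1 := by
      intro h
      have hh := Nat.dvd_gcd hran h
      rw [hg1] at hh
      have := Nat.dvd_one.mp hh
      have := hr.two_le
      omega
    have hr2 : 2 ≤ r := hr.two_le
    have hcand : (p * r) ∈ {k : ℕ | 0 < k ∧ (∀ m, 1 ≤ m → m < nq → a m ≠ k) ∧
        1 < Nat.gcd k (a (nq - 2)) ∧ Nat.gcd k (a (nq - 1)) = 1} := by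
      refine ⟨by positivity, ?_, ?_, ?_⟩
      · intro m hm1 hm2 hme
        exact hpmin m hm1 (by omega) (hme ▸ Dvd.intro r rfl)
      · have hdg : r ∣ Nat.gcd (p * r) A2 := Nat.dvd_gcd ⟨p, mul_comm p r⟩ hrA2
        have hpos2 : 0 < Nat.gcd (p * r) A2 :=
          Nat.gcd_pos_of_pos_left _ (by positivity)
        have := Nat.le_of_dvd hpos2 hdg
        rw [← hA2]
        omega
      · rw [← hA1]
        exact Nat.Coprime.mul ((hp.coprime_iff_not_dvd).mpr hpA1)
          ((hr.coprime_iff_not_dvd).mpr hrA1)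
    have hle := hlb hcand
    have hqr : q * r ∣ a nq :=
      Nat.Coprime.mul_dvd_of_dvd_of_dvd ((Nat.coprime_primes hq hr).mpr (Ne.symm hrq))
        hqdvd hran
    have h1 := Nat.le_of_dvd hpos hqr
    have h2 : p * r < q * r := Nat.mul_lt_mul_of_lt_of_le hpq (le_refl r) (by omega)
    omega
end

section
/- The odd Yellowstone variant is a permutation of the odd positive integers: with Ω the set of odd positive integers, the sequence starting 1, 3, 5 and extended greedily within Ω (smallest unused element of Ω sharing a factor with the term two back and coprime to the previous term) is a bijection onto Ω. -/
/-!
Injectivity is built into the definition, so the work is surjectivity. The terms are distinct,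
hence tend to infinity, and the greedy rule says: if an odd number `x` that is not yet a term
shares a factor with `c m` and is coprime to `c (m + 1)`, then `c (m + 2) ≤ x`.

If only finitely many terms were multiples of `3`, all bounded by `B`, then for large `m` and
`p` the least prime factor of `c m`, the new candidates `3 p ^ a > B` would first force `p > B`
and then `c (m + 2) ≤ 3 p < c m`, an infinite descent. With `3` dividing infinitely many terms,
the candidates `3 ^ a * q` show that every odd prime `q` does, and then the candidates `q ^ a`
show that powers of `q` occur infinitely often. Finally, if the odd number `k` were missing,
then once a late term shares a factor with `k`, so does every later one (else `k` would be
chosen), which a later power of a prime not dividing `k` contradicts.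
-/

/-- The odd Yellowstone variant: c 1 = 1, c 2 = 3, c 3 = 5, and for n ≥ 4,
c n is the least odd positive integer not among c 1, …, c (n-1) which
shares a common factor with c (n-2) and is coprime to c (n-1). -/
def IsOddYellowstone (c : ℕ → ℕ) : Prop :=
  c 1 = 1 ∧ c 2 = 3 ∧ c 3 = 5 ∧
  ∀ n, 4 ≤ n →
    IsLeast {k : ℕ | 0 < k ∧ Odd k ∧ (∀ m, 1 ≤ m → m < n → c m ≠ k) ∧
      1 < Nat.gcd k (c (n - 2)) ∧ Nat.gcd k (c (n - 1)) = 1} (c n)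

open Filter Nat

lemma exists_forall_le_of_eventually_not {β : Type*} [Preorder β] [IsDirectedOrder β]
    [Nonempty β] (f : ℕ → β) {P : ℕ → Prop} (h : ∀ᶠ n in atTop, ¬ P n) :
    ∃ B, ∀ n, P n → f n ≤ B := by
  rw [← Nat.cofinite_eq_atTop, eventually_cofinite] at h
  simp only [not_not] at h
  obtain ⟨B, hB⟩ := (h.image f).bddAbove
  exact ⟨B, fun n hn => hB ⟨n, hn, rfl⟩⟩

lemma not_eventually_add_two_lt {α : Type*} [Preorder α] [WellFoundedLT α] (f : ℕ → α) :
    ¬ ∀ᶠ n in atTop, f (n + 2) < f n := by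
  intro h
  obtain ⟨N, hN⟩ := eventually_atTop.1 h
  obtain ⟨k, hk⟩ := WellFounded.not_rel_apply_succ (r := (· < ·)) fun k => f (N + 2 * k)
  exact hk (by simpa [mul_add, ← add_assoc] using hN (N + 2 * k) (by omega))

namespace IsOddYellowstone

variable {c : ℕ → ℕ}

lemma mapsTo (hc : IsOddYellowstone c) : Set.MapsTo c {n | 1 ≤ n} {k | 0 < k ∧ Odd k} := by
  intro n (hn : 1 ≤ n)
  rcases lt_or_ge n 4 with h | h
  · interval_cases n <;> simp only [hc.1, hc.2.1, hc.2.2.1] <;> decide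
  · exact ⟨(hc.2.2.2 n h).1.1, (hc.2.2.2 n h).1.2.1⟩

lemma odd (hc : IsOddYellowstone c) {n : ℕ} (hn : 1 ≤ n) : Odd (c n) := (hc.mapsTo hn).2

lemma ne_of_lt (hc : IsOddYellowstone c) {a b : ℕ} (ha : 1 ≤ a) (hab : a < b) :
    c a ≠ c b := by
  rcases lt_or_ge b 4 with h | h
  · interval_cases b <;> interval_cases a <;> simp [hc.1, hc.2.1, hc.2.2.1]
  · exact (hc.2.2.2 b h).1.2.2.1 a ha hab

lemma injOn (hc : IsOddYellowstone c) : Set.InjOn c {n | 1 ≤ n} := by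
  intro a (ha : 1 ≤ a) b (hb : 1 ≤ b) hab
  by_contra hne
  rcases Nat.lt_or_gt_of_ne hne with h | h
  · exact hc.ne_of_lt ha h hab
  · exact hc.ne_of_lt hb h hab.symm

lemma tendsto_atTop (hc : IsOddYellowstone c) : Tendsto c atTop atTop := by
  have hinj : Function.Injective fun n => c (n + 1) := fun a b h =>
    Nat.succ_injective (hc.injOn (Nat.le_add_left 1 a) (Nat.le_add_left 1 b) h)
  have := hinj.tendsto_cofinite
  rw [Nat.cofinite_eq_atTop] at this
  exact (tendsto_add_atTop_iff_nat 1).1 this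

lemma coprime_succ (hc : IsOddYellowstone c) {m : ℕ} (hm : 1 ≤ m) :
    Coprime (c (m + 1)) (c m) := by
  rcases lt_or_ge m 3 with h | h
  · interval_cases m <;> simp only [hc.1, hc.2.1, hc.2.2.1] <;> decide
  · simpa using (hc.2.2.2 (m + 1) (by omega)).1.2.2.2.2

lemma not_coprime_add_two (hc : IsOddYellowstone c) {m : ℕ} (hm : 2 ≤ m) :
    ¬ Coprime (c (m + 2)) (c m) :=
  (hc.2.2.2 (m + 2) (by omega)).1.2.2.2.1.ne'

lemma add_two_le (hc : IsOddYellowstone c) {m x : ℕ} (hm : 2 ≤ m) (hx : Odd x)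
    (hnew : ∀ j, 1 ≤ j → j < m + 2 → c j ≠ x) (hshare : ¬ Coprime x (c m))
    (hcop : Coprime x (c (m + 1))) : c (m + 2) ≤ x :=
  have hgcd : 0 < x.gcd (c m) := Nat.gcd_pos_of_pos_left (c m) hx.pos
  (hc.2.2.2 (m + 2) (by omega)).2 ⟨hx.pos, hx, hnew, lt_of_le_of_ne hgcd (Ne.symm hshare), hcop⟩

lemma add_two_le_pow_mul (hc : IsOddYellowstone c) {m p a y : ℕ} (hm : 2 ≤ m) (hp : 1 < p)
    (hpm : p ∣ c m) (ha : a ≠ 0) (hy : Odd y) (hyc : Coprime y (c (m + 1)))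
    (hnew : ∀ j, 1 ≤ j → j < m + 2 → c j ≠ p ^ a * y) : c (m + 2) ≤ p ^ a * y := by
  refine hc.add_two_le hm (((hc.odd (by omega)).of_dvd_nat hpm).pow.mul hy) hnew
    (Nat.not_coprime_of_dvd_of_dvd hp (dvd_mul_of_dvd_left (dvd_pow_self p ha) y) hpm) ?_
  exact (((hc.coprime_succ (by omega)).coprime_dvd_right hpm).symm.pow_left a).mul_left hyc

lemma add_two_le_pow_mul_three (hc : IsOddYellowstone c) {B m : ℕ}
    (hB : ∀ n, 3 ∣ c n → c n ≤ B) (hm : 2 ≤ m) (h3 : ¬ 3 ∣ c (m + 1)) {p a : ℕ} (hp : 1 < p)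
    (hpm : p ∣ c m) (ha : a ≠ 0) (hBa : B < p ^ a * 3) : c (m + 2) ≤ p ^ a * 3 :=
  hc.add_two_le_pow_mul hm hp hpm ha (by decide) ((prime_three.coprime_iff_not_dvd).2 h3)
    fun j _ _ hj => (hB j (hj ▸ dvd_mul_left 3 _)).not_gt (hj ▸ hBa)

lemma lt_of_dvd (hc : IsOddYellowstone c) {B m : ℕ}
    (hB : ∀ n, 3 ∣ c n → c n ≤ B) (hm : 2 ≤ m) (h3 : ¬ 3 ∣ c (m + 1)) {p : ℕ} (hp : 1 < p)
    (hpm : p ∣ c m) (hlarge : 3 * B ^ 2 < c (m + 2)) : B < p := by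
  have hB3 : 3 ≤ B := hc.2.1 ▸ hB 2 (by rw [hc.2.1])
  -- the candidate `p ^ a * 3` with `p ^ (a - 1) ≤ B < p ^ a` is new and at most `3 B p`
  have hBa : B < p ^ (Nat.log p B + 1) := Nat.lt_pow_succ_log_self hp B
  have hpow : p ^ (Nat.log p B + 1) ≤ B * p := by
    rw [pow_succ]
    exact Nat.mul_le_mul_right p (Nat.pow_log_le_self p (by omega))
  have := hc.add_two_le_pow_mul_three hB hm h3 hp hpm (a := Nat.log p B + 1) (Nat.succ_ne_zero _)
    (by omega)
  exact Nat.lt_of_mul_lt_mul_left (a := B) (by nlinarith)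

lemma add_two_lt (hc : IsOddYellowstone c) {B m : ℕ}
    (hB : ∀ n, 3 ∣ c n → c n ≤ B) (hm : 2 ≤ m) (h3 : ¬ 3 ∣ c (m + 1))
    (hlarge : 3 * B ^ 2 < c (m + 2)) : c (m + 2) < c m := by
  have hB3 : 3 ≤ B := hc.2.1 ▸ hB 2 (by rw [hc.2.1])
  have hcm : c m ≠ 1 := fun h => hc.not_coprime_add_two hm (h ▸ Nat.coprime_one_right _)
  set p := (c m).minFac
  have hp : p.Prime := Nat.minFac_prime hcm
  have hBp : B < p := hc.lt_of_dvd hB hm h3 hp.one_lt (Nat.minFac_dvd _) hlarge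
  have hle : c (m + 2) ≤ p * 3 := by
    simpa using hc.add_two_le_pow_mul_three hB hm h3 hp.one_lt (Nat.minFac_dvd _) one_ne_zero
      (by rw [pow_one]; omega)
  by_cases hprime : (c m).Prime
  · -- `c (m + 2)` is an odd multiple of the prime `c m = p`, at most `3 p`, yet neither `p` nor
    -- `3 p`
    exfalso
    have hpm : c m = p := hprime.minFac_eq.symm
    obtain ⟨t, ht⟩ : p ∣ c (m + 2) := by
      have := hc.not_coprime_add_two hm
      rwa [Nat.coprime_comm, hpm, hp.coprime_iff_not_dvd, not_not] at this
    have ht3 : t ≤ 3 := by nlinarith [hp.pos]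
    have hto : Odd t := (Nat.odd_mul.1 (ht ▸ hc.odd (by omega))).2
    obtain rfl | rfl : t = 1 ∨ t = 3 := by obtain ⟨r, rfl⟩ := hto; omega
    · exact hc.ne_of_lt (by omega) (by omega : m < m + 2) (by rw [ht, hpm, mul_one])
    · exact absurd (hB (m + 2) (ht ▸ dvd_mul_left 3 p)) (by nlinarith)
  · have := Nat.minFac_sq_le_self (hc.mapsTo (by omega : 1 ≤ m)).1 hprime
    nlinarith

lemma frequently_three_dvd (hc : IsOddYellowstone c) : ∃ᶠ n in atTop, 3 ∣ c n := by
  by_contra h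
  rw [not_frequently] at h
  obtain ⟨B, hB⟩ := exists_forall_le_of_eventually_not c h
  refine not_eventually_add_two_lt c ?_
  filter_upwards [eventually_ge_atTop 2, (tendsto_add_atTop_nat 1).eventually h,
    (tendsto_add_atTop_nat 2).eventually (hc.tendsto_atTop.eventually_gt_atTop (3 * B ^ 2))]
    with m hm h3 hlarge
  exact hc.add_two_lt hB hm h3 hlarge

lemma frequently_dvd (hc : IsOddYellowstone c) {q : ℕ} (hq : q.Prime) (hqo : Odd q) :
    ∃ᶠ n in atTop, q ∣ c n := by
  by_contra h
  rw [not_frequently] at h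
  obtain ⟨B, hB⟩ := exists_forall_le_of_eventually_not c h
  have hBx : B < 3 ^ (B + 1) * q := B.lt_succ_self.trans <|
    (Nat.lt_pow_self (by norm_num)).trans_le (Nat.le_mul_of_pos_right _ hq.pos)
  obtain ⟨m, h3, hm, hq1, hlarge⟩ := (hc.frequently_three_dvd.and_eventually
    ((eventually_ge_atTop 2).and (((tendsto_add_atTop_nat 1).eventually h).and
      ((tendsto_add_atTop_nat 2).eventually
        (hc.tendsto_atTop.eventually_gt_atTop (3 ^ (B + 1) * q)))))).exists
  refine hlarge.not_ge (hc.add_two_le_pow_mul hm (by norm_num) h3 (Nat.succ_ne_zero _) hqo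
    ((hq.coprime_iff_not_dvd).2 hq1) fun j _ _ hj => ?_)
  exact (hB j (hj ▸ dvd_mul_left q _)).not_gt (hj ▸ hBx)

lemma frequently_eq_pow (hc : IsOddYellowstone c) {q : ℕ} (hq : q.Prime) (hqo : Odd q) :
    ∃ᶠ n in atTop, ∃ e, c n = q ^ e := by
  by_contra h
  rw [not_frequently] at h
  obtain ⟨B, hB⟩ := exists_forall_le_of_eventually_not c h
  have hBx : B < q ^ (B + 1) * 1 := by
    simpa using B.lt_succ_self.trans (Nat.lt_pow_self hq.one_lt)
  obtain ⟨m, hqm, hm, hlarge⟩ := ((hc.frequently_dvd hq hqo).and_eventually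
    ((eventually_ge_atTop 2).and ((tendsto_add_atTop_nat 2).eventually
      (hc.tendsto_atTop.eventually_gt_atTop (q ^ (B + 1) * 1))))).exists
  refine hlarge.not_ge (hc.add_two_le_pow_mul hm hq.one_lt hqm (Nat.succ_ne_zero _) odd_one
    (Nat.coprime_one_left _) fun j _ _ hj => ?_)
  exact (hB j ⟨B + 1, by rw [hj, mul_one]⟩).not_gt (hj ▸ hBx)

lemma not_coprime_succ_of_forall_ne (hc : IsOddYellowstone c) {k m : ℕ} (hk : Odd k)
    (hmiss : ∀ n, 1 ≤ n → c n ≠ k) (hm : 2 ≤ m) (hlarge : k < c (m + 2))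
    (hshare : ¬ Coprime k (c m)) :
    ¬ Coprime k (c (m + 1)) := fun hcop =>
  hlarge.not_ge (hc.add_two_le hm hk (fun j hj _ => hmiss j hj) hshare hcop)

lemma surjOn (hc : IsOddYellowstone c) : Set.SurjOn c {n | 1 ≤ n} {k | 0 < k ∧ Odd k} := by
  rintro k ⟨-, hko⟩
  by_contra hmiss
  simp only [Set.mem_image, not_exists, not_and] at hmiss
  have hk1 : k ≠ 1 := fun h => hmiss 1 (le_refl 1) (by rw [hc.1, h])
  obtain ⟨N, hN⟩ := eventually_atTop.1 (hc.tendsto_atTop.eventually_gt_atTop k)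
  obtain ⟨m₀, hm₀, hpm₀⟩ := (hc.frequently_dvd (Nat.minFac_prime hk1)
    (hko.of_dvd_nat (Nat.minFac_dvd k))).forall_exists_of_atTop (N + 2)
  have hshare : ∀ n, m₀ ≤ n → ¬ Coprime k (c n) := by
    refine Nat.le_induction ?_ fun n hn ih => ?_
    · exact Nat.not_coprime_of_dvd_of_dvd (Nat.minFac_prime hk1).one_lt (Nat.minFac_dvd k) hpm₀
    · exact hc.not_coprime_succ_of_forall_ne hko hmiss (by omega) (hN _ (by omega)) ih
  obtain ⟨q, hkq, hq⟩ := Nat.exists_infinite_primes (k + 1)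
  have hqo : Odd q := hq.odd_of_ne_two (by have := hko.pos; omega)
  obtain ⟨n, hn, e, hne⟩ := (hc.frequently_eq_pow hq hqo).forall_exists_of_atTop m₀
  refine hshare n hn (hne ▸ Coprime.pow_right e ?_)
  exact Nat.coprime_comm.1
    ((hq.coprime_iff_not_dvd).2 (Nat.not_dvd_of_pos_of_lt hko.pos (by omega)))

end IsOddYellowstone

theorem odd_yellowstone_is_permutation (c : ℕ → ℕ) (hc : IsOddYellowstone c) :
    Set.BijOn c {n : ℕ | 1 ≤ n} {k : ℕ | 0 < k ∧ Odd k} :=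
  ⟨hc.mapsTo, hc.injOn, hc.surjOn⟩
end
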